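/- Let Δ : {1,…,T} → ℤ satisfy Σ_{t=1}^{τ} Δ(t) ≥ 0 for all τ, Σ_{t=1}^{T} Δ(t) = 0, and Σ_{t=1}^{T} |Δ(t)| > 0. Then there exist times t* < t** with Δ(t*) > 0, Δ(t**) < 0, Δ(t) = 0 for t < t*, and Δ(t) ≥ 0 for t* < t < t**; moreover, replacing Δ(t*) by Δ(t*) − 1 and Δ(t**) by Δ(t**) + 1 yields a function Δ' that still satisfies all partial sums nonnegative, total sum zero, and Σ |Δ'(t)| ≤ Σ |Δ(t)| − 2. -/
import Mathlib


/-- Inductive step of the deferral reduction: an integer profile `Δ` with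
nonnegative partial sums, zero total, and positive ℓ¹-norm admits an earliest
positive entry `t₁` and a later negative entry `t₂` (with zero entries before
`t₁` and nonnegative entries between them) such that the unit transfer from
`t₁` to `t₂` preserves the invariants and decreases the ℓ¹-norm by at least 2. -/
theorem stmt_15 (T : ℕ) (Δ : ℕ → ℤ)
    (hpart : ∀ τ ∈ Finset.Icc 1 T, 0 ≤ ∑ t ∈ Finset.Icc 1 τ, Δ t)
    (htot : ∑ t ∈ Finset.Icc 1 T, Δ t = 0)
    (hpos : 0 < ∑ t ∈ Finset.Icc 1 T, |Δ t|) :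
    ∃ t₁ ∈ Finset.Icc 1 T, ∃ t₂ ∈ Finset.Icc 1 T, t₁ < t₂ ∧
      0 < Δ t₁ ∧ Δ t₂ < 0 ∧
      (∀ t ∈ Finset.Icc 1 T, t < t₁ → Δ t = 0) ∧
      (∀ t, t₁ < t → t < t₂ → 0 ≤ Δ t) ∧
      (let Δ' : ℕ → ℤ :=
        fun t => if t = t₁ then Δ t - 1 else if t = t₂ then Δ t + 1 else Δ t
      (∀ τ ∈ Finset.Icc 1 T, 0 ≤ ∑ t ∈ Finset.Icc 1 τ, Δ' t) ∧
      ∑ t ∈ Finset.Icc 1 T, Δ' t = 0 ∧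
      ∑ t ∈ Finset.Icc 1 T, |Δ' t| ≤ (∑ t ∈ Finset.Icc 1 T, |Δ t|) - 2) := by
  classical
  -- there is a nonzero entry
  have hne : ∃ t ∈ Finset.Icc 1 T, Δ t ≠ 0 := by
    by_contra h
    push_neg at h
    have : ∑ t ∈ Finset.Icc 1 T, |Δ t| = 0 :=
      Finset.sum_eq_zero fun t ht => by simp [h t ht]
    omega
  set A := (Finset.Icc 1 T).filter (fun t => Δ t ≠ 0) with hA
  have hAne : A.Nonempty := by
    obtain ⟨t, ht, h⟩ := hne
    exact ⟨t, by simp [hA, ht, h]⟩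
  set t₁ := A.min' hAne with ht₁def
  have ht₁A : t₁ ∈ A := A.min'_mem hAne
  have ht₁S : t₁ ∈ Finset.Icc 1 T := (Finset.mem_filter.mp ht₁A).1
  have ht₁ne : Δ t₁ ≠ 0 := (Finset.mem_filter.mp ht₁A).2
  obtain ⟨ht₁1, ht₁T⟩ := Finset.mem_Icc.mp ht₁S
  have hzero_before : ∀ t ∈ Finset.Icc 1 T, t < t₁ → Δ t = 0 := by
    intro t htS hlt
    by_contra h
    have : t₁ ≤ t := A.min'_le t (by simp [hA, Finset.mem_Icc.mp htS, h])
    omega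
  -- Δ t₁ > 0
  have hsum_t₁ : ∑ t ∈ Finset.Icc 1 t₁, Δ t = Δ t₁ := by
    refine Finset.sum_eq_single_of_mem t₁ (Finset.mem_Icc.mpr ⟨ht₁1, le_rfl⟩) ?_
    intro t ht hne'
    obtain ⟨h1, h2⟩ := Finset.mem_Icc.mp ht
    exact hzero_before t (Finset.mem_Icc.mpr ⟨h1, le_trans h2 ht₁T⟩)
      (lt_of_le_of_ne h2 hne')
  have hΔ1 : 0 < Δ t₁ := by
    have := hpart t₁ (Finset.mem_Icc.mpr ⟨ht₁1, ht₁T⟩)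
    rw [hsum_t₁] at this
    omega
  -- existence of a later negative entry
  set B := (Finset.Icc 1 T).filter (fun t => t₁ < t ∧ Δ t < 0) with hB
  have hBne : B.Nonempty := by
    by_contra h
    rw [Finset.not_nonempty_iff_eq_empty, Finset.filter_eq_empty_iff] at h
    have hnn : ∀ t ∈ Finset.Icc 1 T, 0 ≤ Δ t := by
      intro t ht
      rcases lt_trichotomy t t₁ with hlt | heq | hgt
      · exact le_of_eq (hzero_before t ht hlt).symm
      · subst heq; exact hΔ1.le
      · have := h ht; push_neg at this; exact this hgt
    have : Δ t₁ ≤ ∑ t ∈ Finset.Icc 1 T, Δ t :=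
      Finset.single_le_sum hnn ht₁S
    omega
  set t₂ := B.min' hBne with ht₂def
  have ht₂B : t₂ ∈ B := B.min'_mem hBne
  have ht₂S : t₂ ∈ Finset.Icc 1 T := (Finset.mem_filter.mp ht₂B).1
  have h12 : t₁ < t₂ := (Finset.mem_filter.mp ht₂B).2.1
  have hΔ2 : Δ t₂ < 0 := (Finset.mem_filter.mp ht₂B).2.2
  obtain ⟨ht₂1, ht₂T⟩ := Finset.mem_Icc.mp ht₂S
  have hbetween : ∀ t, t₁ < t → t < t₂ → 0 ≤ Δ t := by
    intro t h1 h2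
    by_contra h
    push_neg at h
    have htS : t ∈ Finset.Icc 1 T :=
      Finset.mem_Icc.mpr ⟨le_trans ht₁1 h1.le, le_trans h2.le ht₂T⟩
    have : t₂ ≤ t := B.min'_le t (by simp [hB, Finset.mem_Icc.mp htS, h1, h])
    omega
  have h12ne : t₁ ≠ t₂ := h12.ne
  refine ⟨t₁, ht₁S, t₂, ht₂S, h12, hΔ1, hΔ2, hzero_before, hbetween, ?_⟩
  intro Δ'
  have hΔ'eq : ∀ t, Δ' t = Δ t - (if t = t₁ then (1:ℤ) else 0)
      + (if t = t₂ then (1:ℤ) else 0) := by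
    intro t
    by_cases h1 : t = t₁
    · subst h1
      simp [Δ', if_neg h12ne]
    · by_cases h2 : t = t₂
      · subst h2; simp [Δ', h1]
      · simp [Δ', h1, h2]
  have hsum : ∀ τ, ∑ t ∈ Finset.Icc 1 τ, Δ' t
      = ∑ t ∈ Finset.Icc 1 τ, Δ t
        - (if t₁ ∈ Finset.Icc 1 τ then (1:ℤ) else 0)
        + (if t₂ ∈ Finset.Icc 1 τ then (1:ℤ) else 0) := by
    intro τ
    simp only [hΔ'eq]
    rw [Finset.sum_add_distrib, Finset.sum_sub_distrib,
      Finset.sum_ite_eq' (Finset.Icc 1 τ) t₁ (fun _ => (1:ℤ)),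
      Finset.sum_ite_eq' (Finset.Icc 1 τ) t₂ (fun _ => (1:ℤ))]
  -- partial sum ≥ 1 for t₁ ≤ τ < t₂
  have hmid : ∀ τ, t₁ ≤ τ → τ < t₂ → 1 ≤ ∑ t ∈ Finset.Icc 1 τ, Δ t := by
    intro τ hτ1 hτ2
    have hnn : ∀ t ∈ Finset.Icc 1 τ, 0 ≤ Δ t := by
      intro t ht
      obtain ⟨h1, h2⟩ := Finset.mem_Icc.mp ht
      rcases lt_trichotomy t t₁ with hlt | heq | hgt
      · exact le_of_eq (hzero_before t
          (Finset.mem_Icc.mpr ⟨h1, le_trans h2 (le_trans hτ2.le ht₂T)⟩) hlt).symm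
      · subst heq; exact hΔ1.le
      · exact hbetween t hgt (lt_of_le_of_lt h2 hτ2)
    have : Δ t₁ ≤ ∑ t ∈ Finset.Icc 1 τ, Δ t :=
      Finset.single_le_sum hnn (Finset.mem_Icc.mpr ⟨ht₁1, hτ1⟩)
    omega
  refine ⟨?_, ?_, ?_⟩
  · intro τ hτ
    rw [hsum τ]
    by_cases hc1 : t₁ ≤ τ
    · by_cases hc2 : t₂ ≤ τ
      · rw [if_pos (Finset.mem_Icc.mpr ⟨ht₁1, hc1⟩),
          if_pos (Finset.mem_Icc.mpr ⟨ht₂1, hc2⟩)]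
        have := hpart τ hτ
        omega
      · rw [if_pos (Finset.mem_Icc.mpr ⟨ht₁1, hc1⟩),
          if_neg (by simp [Finset.mem_Icc]; omega)]
        have := hmid τ hc1 (by omega)
        omega
    · rw [if_neg (by simp [Finset.mem_Icc]; omega),
        if_neg (by simp [Finset.mem_Icc]; omega)]
      have := hpart τ hτ
      omega
  · rw [hsum T, if_pos ht₁S, if_pos ht₂S]
    omega
  · have habs : ∀ t, |Δ' t| = |Δ t| - (if t = t₁ then (1:ℤ) else 0)
        - (if t = t₂ then (1:ℤ) else 0) := by
      intro t
      by_cases h1 : t = t₁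
      · subst h1
        simp only [Δ', if_pos rfl, if_neg h12ne]
        rw [abs_of_pos hΔ1, abs_of_nonneg (by omega)]
        simp only [if_true]
        ring
      · by_cases h2 : t = t₂
        · subst h2
          simp only [Δ', if_neg h1, if_pos rfl]
          rw [abs_of_neg hΔ2, abs_of_nonpos (by omega)]
          simp only [if_true]
          ring
        · simp [Δ', h1, h2]
    simp only [habs]
    rw [Finset.sum_sub_distrib, Finset.sum_sub_distrib,
      Finset.sum_ite_eq' (Finset.Icc 1 T) t₁ (fun _ => (1:ℤ)),
      Finset.sum_ite_eq' (Finset.Icc 1 T) t₂ (fun _ => (1:ℤ)),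
      if_pos ht₁S, if_pos ht₂S]
    omega
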